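/- For every integer k ≥ 1 there exist constants c > 0 and C > 0 such that for all real numbers ξ₁, ξ₂, ξ₃, setting ξ = ξ₁ − ξ₂ + ξ₃ and M = max{|ξ|, |ξ₁|, |ξ₂|, |ξ₃|}, one has c · M^{2k−2} · |ξ − ξ₁| · |ξ − ξ₃| ≤ |Φ_{2k}(ξ, ξ₁, ξ₂, ξ₃)| ≤ C · M^{2k−2} · |ξ − ξ₁| · |ξ − ξ₃|. -/

import Mathlib

/-!
Put `x = ξ₂`, `a = ξ - ξ₁ = ξ₃ - ξ₂` and `b = ξ - ξ₃ = ξ₁ - ξ₂`. Then `ξ₃ = x + a`, `ξ₁ = x + b`,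
`ξ = x + a + b`, and `Φ_{2k}` is the second difference `f (x + a + b) - f (x + a) - f (x + b) + f x`
of `f y = y ^ (2k)`. It factors as `a * b * T` with `T` a polynomial, homogeneous of degree
`2k - 2`. `T` is positive away from the origin: where `a * b ≠ 0` by strict convexity of `f`, and
on `a = 0` or `b = 0` because there it is `2k (u ^ (2k-1) - v ^ (2k-1)) / (u - v)` for some
`(u, v) ≠ 0`. By homogeneity, the extreme values of `T / M ^ (2k-2)` on the unit sphere give the
constants.
-/

open Finset Metric

section Algebra

variable {R : Type*} [CommRing R]

def geomSum₂ (n : ℕ) (x y : R) : R := ∑ i ∈ range n, x ^ i * y ^ (n - 1 - i)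

theorem geomSum₂_mul_sub (n : ℕ) (x y : R) : geomSum₂ n x y * (x - y) = x ^ n - y ^ n :=
  geom_sum₂_mul x y n

theorem geomSum₂_self (n : ℕ) (x : R) : geomSum₂ n x x = n * x ^ (n - 1) :=
  geom_sum₂_self x n

theorem mul_geomSum₂_mul_mul (n : ℕ) (t x y : R) :
    t * geomSum₂ n (t * x) (t * y) = t ^ n * geomSum₂ n x y := by
  simp only [geomSum₂, mul_sum]
  refine sum_congr rfl fun i hi => ?_
  have ht : t ^ n = t * t ^ i * t ^ (n - 1 - i) := by
    rw [mul_assoc, ← pow_add, ← pow_succ']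
    congr 1
    have := mem_range.mp hi
    omega
  rw [ht, mul_pow, mul_pow]
  ring

def secondDiff (f : R → R) (x a b : R) : R := f (x + a + b) - f (x + a) - f (x + b) + f x

theorem secondDiff_comm (f : R → R) (x a b : R) : secondDiff f x a b = secondDiff f x b a := by
  simp only [secondDiff, add_right_comm x a b]
  ring

def powSecondDiffQuot (n : ℕ) (x a b : R) : R :=
  ∑ i ∈ range n, (geomSum₂ i (x + a + b) (x + a) * (x + b) ^ (n - 1 - i) +
    (x + a) ^ i * geomSum₂ (n - 1 - i) (x + b) x)

theorem mul_powSecondDiffQuot (n : ℕ) (x a b : R) :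
    b * powSecondDiffQuot n x a b = geomSum₂ n (x + a + b) (x + b) - geomSum₂ n (x + a) x := by
  rw [powSecondDiffQuot, mul_sum, geomSum₂, geomSum₂, ← sum_sub_distrib]
  refine sum_congr rfl fun i _ => ?_
  have h₁ := geomSum₂_mul_sub i (x + a + b) (x + a)
  have h₂ := geomSum₂_mul_sub (n - 1 - i) (x + b) x
  linear_combination (x + b) ^ (n - 1 - i) * h₁ + (x + a) ^ i * h₂

theorem secondDiff_pow (n : ℕ) (x a b : R) :
    secondDiff (· ^ n) x a b = a * b * powSecondDiffQuot n x a b := by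
  have h₁ := geomSum₂_mul_sub n (x + a + b) (x + b)
  have h₂ := geomSum₂_mul_sub n (x + a) x
  simp only [secondDiff]
  linear_combination (-a) * mul_powSecondDiffQuot n x a b - h₁ + h₂

theorem sq_mul_powSecondDiffQuot_mul (n : ℕ) (t x a b : R) :
    t ^ 2 * powSecondDiffQuot n (t * x) (t * a) (t * b) = t ^ n * powSecondDiffQuot n x a b := by
  simp only [powSecondDiffQuot, ← mul_add, mul_sum]
  refine sum_congr rfl fun i hi => ?_
  have ht : t ^ n = t ^ i * t ^ (n - 1 - i) * t := by
    rw [← pow_add, ← pow_succ]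
    congr 1
    have := mem_range.mp hi
    omega
  rw [ht, mul_pow, mul_pow]
  linear_combination (t * (t ^ (n - 1 - i) * (x + b) ^ (n - 1 - i))) *
      mul_geomSum₂_mul_mul i t (x + a + b) (x + a) +
    (t ^ i * (x + a) ^ i * t) * mul_geomSum₂_mul_mul (n - 1 - i) t (x + b) x

end Algebra

theorem geomSum₂_pos {n : ℕ} (hn : Odd n) {x y : ℝ} (h : x ≠ 0 ∨ y ≠ 0) : 0 < geomSum₂ n x y := by
  rcases eq_or_ne x y with rfl | hxy
  · have hx : x ≠ 0 := by tauto
    obtain ⟨m, rfl⟩ := hn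
    rw [geomSum₂_self, Nat.add_sub_cancel]
    have : 0 < x ^ (2 * m) := (even_two_mul m).pow_pos hx
    positivity
  · have hpow : 0 < (x ^ n - y ^ n) * (x - y) := by
      rcases hxy.lt_or_gt with hlt | hlt
      · exact mul_pos_of_neg_of_neg (sub_neg.2 (hn.strictMono_pow hlt)) (sub_neg.2 hlt)
      · exact mul_pos (sub_pos.2 (hn.strictMono_pow hlt)) (sub_pos.2 hlt)
    rw [← geomSum₂_mul_sub, mul_assoc] at hpow
    exact pos_of_mul_pos_left hpow (mul_self_nonneg _)

theorem StrictConvexOn.secondDiff_pos {f : ℝ → ℝ} (hf : StrictConvexOn ℝ Set.univ f) (x : ℝ)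
    {a b : ℝ} (ha : 0 < a) (hb : 0 < b) : 0 < secondDiff f x a b := by
  have hab : 0 < a + b := add_pos ha hb
  have hne : x ≠ x + a + b := by linarith
  have h₁ := hf.2 (Set.mem_univ _) (Set.mem_univ _) hne (div_pos hb hab) (div_pos ha hab)
    (by field_simp; ring)
  have h₂ := hf.2 (Set.mem_univ _) (Set.mem_univ _) hne (div_pos ha hab) (div_pos hb hab)
    (by field_simp)
  have e₁ : (b / (a + b)) • x + (a / (a + b)) • (x + a + b) = x + a := by
    simp only [smul_eq_mul]; field_simp; ring
  have e₂ : (a / (a + b)) • x + (b / (a + b)) • (x + a + b) = x + b := by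
    simp only [smul_eq_mul]; field_simp; ring
  rw [e₁] at h₁
  rw [e₂] at h₂
  simp only [smul_eq_mul] at h₁ h₂
  have hsum : b / (a + b) + a / (a + b) = 1 := by field_simp; ring
  rw [secondDiff]
  linear_combination h₁ + h₂ + (f x + f (x + a + b)) * hsum

theorem StrictConvexOn.mul_mul_secondDiff_pos {f : ℝ → ℝ} (hf : StrictConvexOn ℝ Set.univ f)
    (x : ℝ) {a b : ℝ} (ha : a ≠ 0) (hb : b ≠ 0) : 0 < a * b * secondDiff f x a b := by
  -- `(x, a) ↦ (x + a, -a)` negates the second difference, and likewise for `b`.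
  wlog ha' : 0 < a generalizing x a
  · have := this (x := x + a) (a := -a) (neg_ne_zero.2 ha)
      (neg_pos.2 (lt_of_le_of_ne (not_lt.1 ha') ha))
    convert this using 1
    simp only [secondDiff]
    ring_nf
  wlog hb' : 0 < b generalizing x b
  · have := this (x := x + b) (b := -b) (neg_ne_zero.2 hb)
      (neg_pos.2 (lt_of_le_of_ne (not_lt.1 hb') hb))
    convert this using 1
    simp only [secondDiff]
    ring_nf
  exact mul_pos (mul_pos ha' hb') (hf.secondDiff_pos x ha' hb')

theorem eq_of_forall_mul_eq_mul {f g : ℝ → ℝ} (hf : Continuous f) (hg : Continuous g)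
    (h : ∀ t, t * f t = t * g t) : f = g :=
  Continuous.ext_on (dense_compl_singleton 0) hf hg fun t ht => mul_left_cancel₀ ht (h t)

@[fun_prop]
theorem Continuous.powSecondDiffQuot {X : Type*} [TopologicalSpace X] (n : ℕ) {x a b : X → ℝ}
    (hx : Continuous x) (ha : Continuous a) (hb : Continuous b) :
    Continuous fun p => powSecondDiffQuot n (x p) (a p) (b p) := by
  unfold _root_.powSecondDiffQuot geomSum₂
  fun_prop

theorem powSecondDiffQuot_zero_left (n : ℕ) (x b : ℝ) :
    powSecondDiffQuot n x 0 b = n * geomSum₂ (n - 1) (x + b) x := by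
  have hmul (t : ℝ) : t * powSecondDiffQuot n x 0 t = t * (n * geomSum₂ (n - 1) (x + t) x) := by
    rw [mul_powSecondDiffQuot, add_zero, geomSum₂_self, geomSum₂_self]
    linear_combination (-(n : ℝ)) * geomSum₂_mul_sub (n - 1) (x + t) x
  refine congrFun (eq_of_forall_mul_eq_mul ?_ ?_ hmul) b
  · fun_prop
  · unfold geomSum₂; fun_prop

theorem powSecondDiffQuot_zero_right (n : ℕ) (x a : ℝ) :
    powSecondDiffQuot n x a 0 = n * geomSum₂ (n - 1) (x + a) x := by
  rw [← powSecondDiffQuot_zero_left]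
  rcases eq_or_ne a 0 with rfl | ha
  · rfl
  have hmul (t : ℝ) : t * powSecondDiffQuot n x a t = t * powSecondDiffQuot n x t a := by
    apply mul_left_cancel₀ ha
    rw [← mul_assoc, ← secondDiff_pow, secondDiff_comm, secondDiff_pow]
    ring
  exact congrFun (eq_of_forall_mul_eq_mul (by fun_prop) (by fun_prop) hmul) 0

theorem powSecondDiffQuot_pos {n : ℕ} (hn : Even n) (hn₀ : n ≠ 0) {x a b : ℝ}
    (h : (x, a, b) ≠ 0) : 0 < powSecondDiffQuot n x a b := by
  have hodd : Odd (n - 1) := Nat.Even.sub_odd (Nat.one_le_iff_ne_zero.2 hn₀) hn odd_one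
  have hn' : (0 : ℝ) < n := by exact_mod_cast Nat.pos_of_ne_zero hn₀
  rcases eq_or_ne a 0 with rfl | ha
  · rw [powSecondDiffQuot_zero_left]
    refine mul_pos hn' (geomSum₂_pos hodd ?_)
    contrapose! h
    obtain ⟨h₁, h₂⟩ := h
    simp only [Prod.mk_eq_zero, true_and]
    exact ⟨h₂, by linarith⟩
  rcases eq_or_ne b 0 with rfl | hb
  · rw [powSecondDiffQuot_zero_right]
    refine mul_pos hn' (geomSum₂_pos hodd ?_)
    contrapose! h
    obtain ⟨h₁, h₂⟩ := h
    simp only [Prod.mk_eq_zero, and_true]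
    exact ⟨h₂, by linarith⟩
  have h := (hn.strictConvexOn_pow hn₀).mul_mul_secondDiff_pos x ha hb
  rw [secondDiff_pow, ← mul_assoc] at h
  exact pos_of_mul_pos_right h (mul_self_nonneg _)

theorem exists_bounds_of_isHomogeneous {E : Type*} [NormedAddCommGroup E] [NormedSpace ℝ E]
    [FiniteDimensional ℝ E] [Nontrivial E] {G N : E → ℝ} {d : ℕ}
    (hG : Continuous G) (hN : Continuous N)
    (hG_smul : ∀ t : ℝ, 0 < t → ∀ p, G (t • p) = t ^ d * G p)
    (hN_smul : ∀ t : ℝ, 0 < t → ∀ p, N (t • p) = t * N p)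
    (hG_pos : ∀ p, p ≠ 0 → 0 < G p) (hN_pos : ∀ p, p ≠ 0 → 0 < N p) :
    ∃ c C : ℝ, 0 < c ∧ 0 < C ∧ ∀ p, p ≠ 0 → c * N p ^ d ≤ G p ∧ G p ≤ C * N p ^ d := by
  set H : E → ℝ := fun p => G p / N p ^ d with hH
  have hH_pos (p : E) (hp : p ≠ 0) : 0 < H p := div_pos (hG_pos p hp) (pow_pos (hN_pos p hp) d)
  have hH_smul (t : ℝ) (ht : 0 < t) (p : E) : H (t • p) = H p := by
    simp only [hH, hG_smul t ht, hN_smul t ht, mul_pow]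
    exact mul_div_mul_left _ _ (pow_ne_zero d ht.ne')
  have hS : IsCompact (sphere (0 : E) 1) := isCompact_sphere 0 1
  have hS_ne : (sphere (0 : E) 1).Nonempty := NormedSpace.sphere_nonempty.2 zero_le_one
  have hS_zero {p : E} (hp : p ∈ sphere (0 : E) 1) : p ≠ 0 := ne_zero_of_mem_unit_sphere ⟨p, hp⟩
  have hH_cont : ContinuousOn H (sphere 0 1) :=
    hG.continuousOn.div (hN.pow d).continuousOn fun p hp => (pow_pos (hN_pos p (hS_zero hp)) d).ne'
  obtain ⟨p₀, hp₀, hmin⟩ := hS.exists_isMinOn hS_ne hH_cont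
  obtain ⟨p₁, hp₁, hmax⟩ := hS.exists_isMaxOn hS_ne hH_cont
  refine ⟨H p₀, H p₁, hH_pos p₀ (hS_zero hp₀), hH_pos p₁ (hS_zero hp₁), fun p hp => ?_⟩
  have hu : ‖p‖⁻¹ • p ∈ sphere (0 : E) 1 := by simpa using norm_smul_inv_norm (𝕜 := ℝ) hp
  have hHp : H (‖p‖⁻¹ • p) = G p / N p ^ d := hH_smul _ (inv_pos.2 (norm_pos_iff.2 hp)) p
  have hNp : 0 < N p ^ d := pow_pos (hN_pos p hp) d
  rw [← le_div_iff₀ hNp, ← div_le_iff₀ hNp, ← hHp]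
  exact ⟨hmin hu, hmax hu⟩

theorem exists_bounds_powSecondDiffQuot {n : ℕ} (hn : Even n) (hn₀ : n ≠ 0) :
    ∃ c C : ℝ, 0 < c ∧ 0 < C ∧ ∀ x a b : ℝ, (x, a, b) ≠ 0 →
      c * max (max |x + a + b| |x + b|) (max |x| |x + a|) ^ (n - 2) ≤ powSecondDiffQuot n x a b ∧
      powSecondDiffQuot n x a b ≤
        C * max (max |x + a + b| |x + b|) (max |x| |x + a|) ^ (n - 2) := by
  have hn₂ : 2 ≤ n := by obtain ⟨m, rfl⟩ := hn; omega
  obtain ⟨c, C, hc, hC, h⟩ := exists_bounds_of_isHomogeneous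
    (G := fun p : ℝ × ℝ × ℝ => powSecondDiffQuot n p.1 p.2.1 p.2.2)
    (N := fun p => max (max |p.1 + p.2.1 + p.2.2| |p.1 + p.2.2|) (max |p.1| |p.1 + p.2.1|))
    (d := n - 2) (by fun_prop) (by fun_prop)
    (fun t ht p => by
      apply mul_left_cancel₀ (pow_ne_zero 2 ht.ne')
      simp only [Prod.smul_fst, Prod.smul_snd, smul_eq_mul]
      rw [sq_mul_powSecondDiffQuot_mul, ← mul_assoc, ← pow_add, Nat.add_sub_cancel' hn₂])
    (fun t ht p => by
      simp only [Prod.smul_fst, Prod.smul_snd, smul_eq_mul, ← mul_add, abs_mul, abs_of_pos ht,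
        mul_max_of_nonneg _ _ ht.le])
    (fun p hp => powSecondDiffQuot_pos hn hn₀ hp)
    (fun p hp => by
      contrapose! hp
      simp only [max_le_iff, abs_nonpos_iff] at hp
      obtain ⟨⟨h₁, h₂⟩, h₃, h₄⟩ := hp
      exact Prod.ext h₃ (Prod.ext (by simpa [h₃] using h₄) (by simpa [h₃] using h₂)))
  exact ⟨c, C, hc, hC, fun x a b hp => h (x, a, b) hp⟩

/-- Two-sided bound `|Φ_{2k}| ∼ max{|ξ|,|ξ₁|,|ξ₂|,|ξ₃|}^{2k−2} |ξ−ξ₁| |ξ−ξ₃|` under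
`ξ = ξ₁ − ξ₂ + ξ₃`, for each `k ≥ 1`. -/
theorem phi2k_comparable (k : ℕ) (hk : 1 ≤ k) :
    ∃ c C : ℝ, 0 < c ∧ 0 < C ∧
      ∀ ξ₁ ξ₂ ξ₃ ξ M : ℝ, ξ = ξ₁ - ξ₂ + ξ₃ →
        M = max (max |ξ| |ξ₁|) (max |ξ₂| |ξ₃|) →
        c * M ^ (2 * k - 2) * |ξ - ξ₁| * |ξ - ξ₃| ≤
            |ξ ^ (2 * k) - ξ₁ ^ (2 * k) + ξ₂ ^ (2 * k) - ξ₃ ^ (2 * k)| ∧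
        |ξ ^ (2 * k) - ξ₁ ^ (2 * k) + ξ₂ ^ (2 * k) - ξ₃ ^ (2 * k)| ≤
            C * M ^ (2 * k - 2) * |ξ - ξ₁| * |ξ - ξ₃| := by
  have hn₀ : 2 * k ≠ 0 := by omega
  obtain ⟨c, C, hc, hC, hbound⟩ := exists_bounds_powSecondDiffQuot (even_two_mul k) hn₀
  refine ⟨c, C, hc, hC, fun ξ₁ ξ₂ ξ₃ ξ M hξ hM => ?_⟩
  have h₀ : ξ₂ + (ξ - ξ₁) + (ξ - ξ₃) = ξ := by linarith
  have h₁ : ξ₂ + (ξ - ξ₃) = ξ₁ := by linarith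
  have h₃ : ξ₂ + (ξ - ξ₁) = ξ₃ := by linarith
  have hΦ : ξ ^ (2 * k) - ξ₁ ^ (2 * k) + ξ₂ ^ (2 * k) - ξ₃ ^ (2 * k) =
      (ξ - ξ₁) * (ξ - ξ₃) * powSecondDiffQuot (2 * k) ξ₂ (ξ - ξ₁) (ξ - ξ₃) := by
    have h := secondDiff_pow (2 * k) ξ₂ (ξ - ξ₁) (ξ - ξ₃)
    simp only [secondDiff] at h
    rw [h₀, h₃, h₁] at h
    linear_combination h
  rw [hΦ, abs_mul, abs_mul]
  by_cases hdeg : ξ - ξ₁ = 0 ∨ ξ - ξ₃ = 0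
  · rcases hdeg with h | h <;> simp [h]
  have hp : (ξ₂, ξ - ξ₁, ξ - ξ₃) ≠ 0 := by simp [(not_or.1 hdeg).1]
  obtain ⟨hlo, hhi⟩ := hbound _ _ _ hp
  rw [h₀, h₁, h₃, ← hM] at hlo hhi
  rw [abs_of_pos (powSecondDiffQuot_pos (even_two_mul k) hn₀ hp)]
  have hab : 0 ≤ |ξ - ξ₁| * |ξ - ξ₃| := by positivity
  constructor
  · linarith [mul_le_mul_of_nonneg_right hlo hab]
  · linarith [mul_le_mul_of_nonneg_right hhi hab]
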